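/- Let ν ≥ 0 be an integer and let L_ν denote the operator u ↦ Δ_ν u − u acting on smooth functions on (0,∞). Then for all integers m ≥ 1 and j ≥ 0 and every r > 0, the m-fold iterate satisfies L_ν^m ψ_j (r) = 2^m · (∏_{i=0}^{m−1} (j + i − ν)) · ψ_{j+m}(r), where the factors j + i − ν are taken in ℤ. In particular L_ν^m ψ_j = 0 on (0,∞) whenever ν − m < j ≤ ν. -/

import Mathlib

open Polynomial

/-- The polynomials `g_j`, defined by `g_0 = 1` and `g_{j+1}(t) = t³ g_j'(t) + t g_j(t)`. -/
noncomputable def g : ℕ → Polynomial ℤ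
  | 0 => 1
  | j + 1 => X ^ 3 * derivative (g j) + X * g j

/-- `ψ_j(r) = e^{-r} g_j(1/r)`. -/
noncomputable def psi (j : ℕ) (r : ℝ) : ℝ := Real.exp (-r) * (Polynomial.aeval r⁻¹) (g j)

/-- The operator `L_ν u = Δ_ν u - u`, where `Δ_ν u(r) = u''(r) + (2ν/r) u'(r)`. -/
noncomputable def Lop (ν : ℕ) (u : ℝ → ℝ) : ℝ → ℝ :=
  fun r => (deriv (deriv u) r + 2 * (ν : ℝ) / r * deriv u r) - u r

/-!
Write `E p (r) = e^{-r} p(1/r)`. Differentiation maps `E p` to `E (-(p + X² p'))`, so `L_ν (E p)` is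
`E` of an explicit polynomial. For `p = g_j` that polynomial is
`(X⁴ g_j'' + 2X³ g_j' + 2X² g_j') - 2ν (X³ g_j' + X g_j)`, and induction on `j` shows the first bracket
is `2j g_{j+1}`, while the second is `g_{j+1}` by definition. Hence `L_ν ψ_j = 2(j - ν) ψ_{j+1}` on
`(0,∞)`, and the iterate follows by induction on `m`, `L_ν` being local and linear.
-/

open Filter Topology

noncomputable def expPoly (p : ℤ[X]) (r : ℝ) : ℝ := Real.exp (-r) * aeval r⁻¹ p

noncomputable def expPolyDeriv (p : ℤ[X]) : ℤ[X] := -(p + X ^ 2 * derivative p)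

theorem psi_eq_expPoly (j : ℕ) : psi j = expPoly (g j) := rfl

theorem expPoly_C_mul (c : ℤ) (p : ℤ[X]) (r : ℝ) :
    expPoly (C c * p) r = c * expPoly p r := by
  rw [expPoly, expPoly, map_mul, aeval_C, algebraMap_int_eq, eq_intCast]
  ring

theorem hasDerivAt_expPoly (p : ℤ[X]) {r : ℝ} (hr : r ≠ 0) :
    HasDerivAt (expPoly p) (expPoly (expPolyDeriv p) r) r := by
  have hexp : HasDerivAt (fun x : ℝ => Real.exp (-x)) (-Real.exp (-r)) r := by
    simpa using (hasDerivAt_neg r).exp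
  have hpoly : HasDerivAt (fun x : ℝ => aeval x⁻¹ p) (aeval r⁻¹ (derivative p) * -(r ^ 2)⁻¹) r :=
    (p.hasDerivAt_aeval r⁻¹).comp r (hasDerivAt_inv hr)
  refine (hexp.mul hpoly).congr_deriv ?_
  simp only [expPoly, expPolyDeriv, map_neg, map_add, map_mul, map_pow, aeval_X, inv_pow]
  ring

theorem deriv_expPoly (p : ℤ[X]) {r : ℝ} (hr : r ≠ 0) :
    deriv (expPoly p) r = expPoly (expPolyDeriv p) r :=
  (hasDerivAt_expPoly p hr).deriv

theorem deriv_deriv_expPoly (p : ℤ[X]) {r : ℝ} (hr : r ≠ 0) :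
    deriv (deriv (expPoly p)) r = expPoly (expPolyDeriv (expPolyDeriv p)) r := by
  have h : deriv (expPoly p) =ᶠ[𝓝 r] expPoly (expPolyDeriv p) := by
    filter_upwards [compl_singleton_mem_nhds hr] with x hx
    exact deriv_expPoly p hx
  rw [h.deriv_eq, deriv_expPoly _ hr]

noncomputable def lopPoly (ν : ℕ) (p : ℤ[X]) : ℤ[X] :=
  expPolyDeriv (expPolyDeriv p) + C (2 * (ν : ℤ)) * X * expPolyDeriv p - p

theorem Lop_expPoly (ν : ℕ) (p : ℤ[X]) {r : ℝ} (hr : r ≠ 0) :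
    Lop ν (expPoly p) r = expPoly (lopPoly ν p) r := by
  rw [Lop, lopPoly, deriv_deriv_expPoly p hr, deriv_expPoly p hr]
  simp only [expPoly, map_add, map_sub, map_mul, aeval_X, aeval_C, map_ofNat]
  push_cast
  field_simp

theorem g_succ (j : ℕ) : g (j + 1) = X ^ 3 * derivative (g j) + X * g j := rfl

theorem X_pow_four_mul_derivative_derivative_g_add (j : ℕ) :
    X ^ 4 * derivative (derivative (g j)) + 2 * X ^ 3 * derivative (g j)
      + 2 * X ^ 2 * derivative (g j) = C (2 * (j : ℤ)) * g (j + 1) := by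
  induction j with
  | zero => simp [g]
  | succ j ih =>
    have ih' := congrArg derivative ih
    simp only [g_succ, derivative_mul, derivative_X_pow, derivative_X, derivative_C,
      derivative_one, derivative_ofNat, Nat.cast_ofNat, Nat.cast_succ, map_mul, map_ofNat,
      map_add, map_one, map_zero, Nat.cast_zero] at ih ih' ⊢
    linear_combination (X : ℤ[X]) ^ 3 * ih' + X * ih

theorem lopPoly_g (ν j : ℕ) : lopPoly ν (g j) = C (2 * ((j : ℤ) - ν)) * g (j + 1) := by
  have h := X_pow_four_mul_derivative_derivative_g_add j
  simp only [lopPoly, expPolyDeriv, derivative_neg, derivative_add, derivative_mul, derivative_X_pow,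
    Nat.cast_ofNat, g_succ, map_mul, map_ofNat, map_sub] at h ⊢
  linear_combination h

theorem Lop_psi (ν j : ℕ) {r : ℝ} (hr : r ≠ 0) :
    Lop ν (psi j) r = 2 * ((j : ℝ) - ν) * psi (j + 1) r := by
  rw [psi_eq_expPoly, psi_eq_expPoly, Lop_expPoly ν _ hr, lopPoly_g, expPoly_C_mul]
  push_cast
  ring

theorem Lop_congr_const_mul (ν : ℕ) {u v : ℝ → ℝ} {c r : ℝ}
    (h : u =ᶠ[𝓝 r] fun x => c * v x) : Lop ν u r = c * Lop ν v r := by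
  have hderiv : deriv u =ᶠ[𝓝 r] fun x => c * deriv v x := by
    filter_upwards [h.deriv] with x hx
    rw [hx, deriv_const_mul_field]
  rw [Lop, Lop, hderiv.deriv_eq, deriv_const_mul_field, hderiv.self_of_nhds, h.self_of_nhds]
  ring

theorem Lop_iterate_psi_eq (ν j m : ℕ) {r : ℝ} (hr : 0 < r) :
    (Lop ν)^[m] (psi j) r =
      2 ^ m * ((∏ i ∈ Finset.range m, ((j : ℤ) + i - ν) : ℤ) : ℝ) * psi (j + m) r := by
  induction m generalizing r with
  | zero => simp
  | succ m ih =>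
    have hloc : (Lop ν)^[m] (psi j) =ᶠ[𝓝 r]
        fun x => 2 ^ m * ((∏ i ∈ Finset.range m, ((j : ℤ) + i - ν) : ℤ) : ℝ) * psi (j + m) x := by
      filter_upwards [Ioi_mem_nhds hr] with x hx
      exact ih hx
    rw [Function.iterate_succ_apply', Lop_congr_const_mul ν hloc, Lop_psi ν _ hr.ne',
      Finset.prod_range_succ, ← add_assoc]
    push_cast
    ring

theorem Lop_iterate_psi_general (ν m j : ℕ) :
    (∀ r : ℝ, 0 < r →
      (Lop ν)^[m] (psi j) r =
        2 ^ m * ((∏ i ∈ Finset.range m, ((j : ℤ) + i - ν) : ℤ) : ℝ) * psi (j + m) r) ∧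
    ((ν : ℤ) - m < (j : ℤ) → j ≤ ν → ∀ r : ℝ, 0 < r → (Lop ν)^[m] (psi j) r = 0) := by
  refine ⟨fun r hr => Lop_iterate_psi_eq ν j m hr, fun hlt hle r hr => ?_⟩
  have hprod : ∏ i ∈ Finset.range m, ((j : ℤ) + i - ν) = 0 :=
    Finset.prod_eq_zero (i := ν - j) (Finset.mem_range.mpr (by omega)) (by omega)
  rw [Lop_iterate_psi_eq ν j m hr, hprod]
  simp

theorem Lop_iterate_psi (ν m j : ℕ) (hm : 1 ≤ m) :
    (∀ r : ℝ, 0 < r →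
      (Lop ν)^[m] (psi j) r =
        2 ^ m * ((∏ i ∈ Finset.range m, ((j : ℤ) + i - ν) : ℤ) : ℝ) * psi (j + m) r) ∧
    ((ν : ℤ) - m < (j : ℤ) → j ≤ ν → ∀ r : ℝ, 0 < r → (Lop ν)^[m] (psi j) r = 0) :=
  Lop_iterate_psi_general ν m j
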